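/- (Averaging lemma) Let μ be a distribution on {-1,1}² with uniform marginals, and let (X_i,Y_i), i = 1..n, be i.i.d. from μ. Let f₁,f₂ : {-1,1}^n → [0,1] and let S ⊆ [n] be a set of coordinates such that for each i ∈ S at most one of f₁,f₂ has I_i(f_j) > ε. Define g_j(x) = E[f_j(Z) | Z restricted to [n]∖S equals x restricted to [n]∖S] (averaging over uniform coordinates in S). Then the g_j do not depend on coordinates in S, take values in [0,1], satisfy E[g_j] = E[f_j], and |E[f₁(X)f₂(Y)] - E[g₁(X)g₂(Y)]| ≤ |S|·√ε. -/

import Mathlib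

/-!
Write `A_i` for averaging out coordinate `i`, so that `avgOut S` is the composite of the `A_i`,
`i ∈ S`. The `A_i` commute and are contractions in `L²`, so averaging never increases an
influence; it therefore suffices to bound the effect of a single `A_i` and add up.
If `g` does not depend on `x_i`, the uniform marginal of `Y_i` gives
`E[g(X) h(Y)] = E[g(X) (A_i h)(Y)]`. Hence, when `I_i(f₁) ≤ ε`,
`E[f₁(X) f₂(Y)] - E[A_i f₁(X) A_i f₂(Y)] = E[(f₁ - A_i f₁)(X) f₂(Y)]`, which is at most
`E|f₁ - A_i f₁| ≤ √(I_i f₁) ≤ √ε` in absolute value because `0 ≤ f₂ ≤ 1`; the case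
`I_i(f₂) ≤ ε` is symmetric.
-/

/-- Influence of coordinate `i` on a real-valued function of the cube (uniform
measure): `I_i(f) = E[(f - E_i f)²]` where `E_i` averages over coordinate `i`. -/
noncomputable def influenceR (n : ℕ) (f : (Fin n → Bool) → ℝ) (i : Fin n) : ℝ :=
  (∑ x : Fin n → Bool,
    (f x - (f (Function.update x i true) + f (Function.update x i false)) / 2)^2) / 2^n

/-- The function obtained from `f` by averaging out (uniformly) the coordinates in
`S`. -/
noncomputable def avgOut (n : ℕ) (S : Finset (Fin n)) (f : (Fin n → Bool) → ℝ)
    (x : Fin n → Bool) : ℝ :=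
  (∑ y ∈ Finset.univ.filter (fun y : Fin n → Bool => ∀ i ∉ S, y i = x i), f y) / 2 ^ S.card

open Finset Function

variable {n : ℕ}

noncomputable def avgCoord (i : Fin n) (f : (Fin n → Bool) → ℝ) (x : Fin n → Bool) : ℝ :=
  (f (update x i true) + f (update x i false)) / 2

section avgCoord

variable (i : Fin n)

lemma avgCoord_update (f : (Fin n → Bool) → ℝ) (x : Fin n → Bool) (b : Bool) :
    avgCoord i f (update x i b) = avgCoord i f x := by
  simp only [avgCoord, update_idem]

lemma sum_avgCoord (f : (Fin n → Bool) → ℝ) : ∑ x, avgCoord i f x = ∑ x, f x := by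
  have hpair : ∀ x, f (update x i true) + f (update x i false) = f x + f (update x i (!x i)) := by
    intro x
    have hself : update x i (x i) = x := update_eq_self i x
    cases hx : x i <;> rw [hx] at hself <;> simp [hself, add_comm]
  have hflip : ∑ x, f (update x i (!x i)) = ∑ x, f x := by
    have hinv : Involutive fun x : Fin n → Bool => update x i (!x i) := fun x => by simp
    exact Fintype.sum_bijective _ hinv.bijective _ _ fun x => rfl
  simp only [avgCoord, ← sum_div, hpair, sum_add_distrib, hflip]
  ring

lemma avgCoord_mem_Icc {f : (Fin n → Bool) → ℝ} (hf : ∀ x, f x ∈ Set.Icc (0 : ℝ) 1)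
    (x : Fin n → Bool) : avgCoord i f x ∈ Set.Icc (0 : ℝ) 1 := by
  obtain ⟨h₀, h₁⟩ := hf (update x i true)
  obtain ⟨h₀', h₁'⟩ := hf (update x i false)
  constructor <;> simp only [avgCoord] <;> linarith

lemma avgCoord_comm (j : Fin n) (f : (Fin n → Bool) → ℝ) :
    avgCoord i (avgCoord j f) = avgCoord j (avgCoord i f) := by
  by_cases hij : i = j
  · rw [hij]
  funext x
  simp only [avgCoord, update_comm hij]
  ring

lemma influenceR_eq (f : (Fin n → Bool) → ℝ) :
    influenceR n f i = (∑ x, (f x - avgCoord i f x) ^ 2) / 2 ^ n := rfl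

lemma sum_sq_avgCoord_le (d : (Fin n → Bool) → ℝ) :
    ∑ x, avgCoord i d x ^ 2 ≤ ∑ x, d x ^ 2 :=
  calc ∑ x, avgCoord i d x ^ 2
      ≤ ∑ x, avgCoord i (fun y => d y ^ 2) x := sum_le_sum fun x _ => by
        simp only [avgCoord]
        nlinarith [sq_nonneg (d (update x i true) - d (update x i false))]
    _ = ∑ x, d x ^ 2 := sum_avgCoord i _

lemma influenceR_avgCoord_le (j : Fin n) (f : (Fin n → Bool) → ℝ) :
    influenceR n (avgCoord j f) i ≤ influenceR n f i := by
  have hcomm : ∀ x, avgCoord j f x - avgCoord i (avgCoord j f) x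
      = avgCoord j (fun y => f y - avgCoord i f y) x := by
    intro x
    rw [avgCoord_comm]
    simp only [avgCoord]
    ring
  simp only [influenceR_eq, hcomm]
  gcongr ?_ / _
  exact sum_sq_avgCoord_le j _

end avgCoord

section avgOut

lemma avgOut_empty (f : (Fin n → Bool) → ℝ) : avgOut n ∅ f = f := by
  funext x
  have hx : univ.filter (fun y : Fin n → Bool => ∀ i ∉ (∅ : Finset (Fin n)), y i = x i) = {x} := by
    ext y
    simp [funext_iff]
  rw [avgOut, hx]
  simp

lemma filter_agree_update_eq {S : Finset (Fin n)} {i : Fin n} (hi : i ∉ S)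
    (x : Fin n → Bool) (b : Bool) :
    univ.filter (fun y : Fin n → Bool => ∀ j ∉ S, y j = update x i b j)
      = (univ.filter fun y : Fin n → Bool => ∀ j ∉ insert i S, y j = x j).filter
          (fun y => y i = b) := by
  ext y
  simp only [mem_filter, mem_univ, true_and, mem_insert, not_or]
  constructor
  · intro h
    refine ⟨fun j ⟨hji, hjS⟩ => by rw [h j hjS, update_of_ne hji], by rw [h i hi, update_self]⟩
  · rintro ⟨h, hyi⟩ j hj
    by_cases hji : j = i
    · rw [hji, hyi, update_self]
    · rw [update_of_ne hji, h j ⟨hji, hj⟩]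

lemma avgOut_insert {S : Finset (Fin n)} {i : Fin n} (hi : i ∉ S) (f : (Fin n → Bool) → ℝ) :
    avgOut n (insert i S) f = avgCoord i (avgOut n S f) := by
  funext x
  have hsplit := sum_filter_add_sum_filter_not
    (univ.filter fun y : Fin n → Bool => ∀ j ∉ insert i S, y j = x j) (fun y => y i = true) f
  simp only [Bool.not_eq_true] at hsplit
  simp only [avgCoord, avgOut, filter_agree_update_eq hi, ← hsplit, card_insert_of_notMem hi,
    pow_succ]
  ring

lemma avgOut_induction (P : ((Fin n → Bool) → ℝ) → Prop) (S : Finset (Fin n))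
    {f : (Fin n → Bool) → ℝ} (hf : P f) (havg : ∀ i g, P g → P (avgCoord i g)) :
    P (avgOut n S f) := by
  induction S using Finset.induction_on with
  | empty => rwa [avgOut_empty]
  | insert i S hi ih => rw [avgOut_insert hi]; exact havg i _ ih

variable (S : Finset (Fin n))

lemma avgOut_congr (f : (Fin n → Bool) → ℝ) {x x' : Fin n → Bool} (h : ∀ i ∉ S, x i = x' i) :
    avgOut n S f x = avgOut n S f x' := by
  have hfilter : ∀ y : Fin n → Bool, (∀ i ∉ S, y i = x i) ↔ (∀ i ∉ S, y i = x' i) :=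
    fun y => forall₂_congr fun i hi => by rw [h i hi]
  simp only [avgOut, hfilter]

lemma avgOut_mem_Icc {f : (Fin n → Bool) → ℝ} (hf : ∀ x, f x ∈ Set.Icc (0 : ℝ) 1)
    (x : Fin n → Bool) : avgOut n S f x ∈ Set.Icc (0 : ℝ) 1 :=
  avgOut_induction (fun g => ∀ x, g x ∈ Set.Icc (0 : ℝ) 1) S hf
    (fun i _ hg => avgCoord_mem_Icc i hg) x

lemma sum_avgOut (f : (Fin n → Bool) → ℝ) : ∑ x, avgOut n S f x = ∑ x, f x :=
  avgOut_induction (fun g => ∑ x, g x = ∑ x, f x) S rfl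
    (fun i g hg => (sum_avgCoord i g).trans hg)

lemma influenceR_avgOut_le (f : (Fin n → Bool) → ℝ) (i : Fin n) :
    influenceR n (avgOut n S f) i ≤ influenceR n f i :=
  avgOut_induction (fun g => influenceR n g i ≤ influenceR n f i) S le_rfl
    (fun j g hg => (influenceR_avgCoord_le i j g).trans hg)

end avgOut

lemma sum_abs_div_card_le_sqrt {α : Type*} [Fintype α] [Nonempty α] (d : α → ℝ) :
    (∑ a, |d a|) / Fintype.card α ≤ √((∑ a, d a ^ 2) / Fintype.card α) := by
  have hcard : (0 : ℝ) < Fintype.card α := by exact_mod_cast Fintype.card_pos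
  have hcs := sq_sum_le_card_mul_sum_sq (s := univ) (f := fun a => |d a|)
  simp only [sq_abs, card_univ] at hcs
  apply Real.le_sqrt_of_sq_le
  rw [div_pow, div_le_div_iff₀ (by positivity) hcard]
  calc (∑ a, |d a|) ^ 2 * Fintype.card α
      ≤ (Fintype.card α * ∑ a, d a ^ 2) * Fintype.card α := by gcongr
    _ = (∑ a, d a ^ 2) * (Fintype.card α) ^ 2 := by ring

noncomputable def corr (μ : Bool × Bool → ℝ) (f g : (Fin n → Bool) → ℝ) : ℝ :=
  ∑ x, ∑ y, (∏ i, μ (x i, y i)) * (f x * g y)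

section corr

variable (μ : Bool × Bool → ℝ)

lemma corr_swap (f g : (Fin n → Bool) → ℝ) : corr (fun p => μ p.swap) g f = corr μ f g := by
  rw [corr, sum_comm]
  simp only [corr, Prod.swap_prod_mk, mul_comm (g _)]

lemma corr_sub_left (f f' g : (Fin n → Bool) → ℝ) :
    corr μ f g - corr μ f' g = corr μ (fun x => f x - f' x) g := by
  simp only [corr, ← sum_sub_distrib, mul_sub, sub_mul]

lemma sum_prod_eq_half_pow (hmargx : ∀ b, μ (b, true) + μ (b, false) = 1/2)
    (x : Fin n → Bool) : ∑ y : Fin n → Bool, ∏ j, μ (x j, y j) = (1/2) ^ n := by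
  rw [← Fintype.prod_sum (fun j b => μ (x j, b))]
  simp [hmargx]

lemma abs_corr_le (hnn : ∀ p, 0 ≤ μ p) (hmargx : ∀ b, μ (b, true) + μ (b, false) = 1/2)
    (d : (Fin n → Bool) → ℝ) {g : (Fin n → Bool) → ℝ} (hg : ∀ y, g y ∈ Set.Icc (0 : ℝ) 1) :
    |corr μ d g| ≤ (∑ x, |d x|) / 2 ^ n := by
  have hweight : ∀ x : Fin n → Bool, |∑ y, (∏ j, μ (x j, y j)) * g y| ≤ 1 / 2 ^ n := by
    intro x
    have hw : ∀ y : Fin n → Bool, 0 ≤ ∏ j, μ (x j, y j) := fun y => prod_nonneg fun j _ => hnn _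
    rw [abs_of_nonneg (sum_nonneg fun y _ => mul_nonneg (hw y) (hg y).1), ← one_div_pow,
      ← sum_prod_eq_half_pow μ hmargx x]
    exact sum_le_sum fun y _ => mul_le_of_le_one_right (hw y) (hg y).2
  calc |corr μ d g| = |∑ x, d x * ∑ y, (∏ j, μ (x j, y j)) * g y| := by
        simp only [corr, mul_sum]
        exact congrArg abs (sum_congr rfl fun x _ => sum_congr rfl fun y _ => by ring)
    _ ≤ ∑ x, |d x| * (1 / 2 ^ n) := by
        refine (abs_sum_le_sum_abs _ _).trans (sum_le_sum fun x _ => ?_)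
        rw [abs_mul]
        exact mul_le_mul_of_nonneg_left (hweight x) (abs_nonneg _)
    _ = (∑ x, |d x|) / 2 ^ n := by rw [← sum_mul, mul_one_div]

lemma sum_mul_avgCoord_of_update (i : Fin n) {g : (Fin n → Bool) → ℝ}
    (hg : ∀ x b, g (update x i b) = g x) (h : (Fin n → Bool) → ℝ) :
    ∑ x, g x * avgCoord i h x = ∑ x, g x * h x := by
  rw [← sum_avgCoord i (fun x => g x * h x)]
  simp only [avgCoord, hg]
  exact sum_congr rfl fun x _ => by ring

section

variable (i : Fin n)

lemma prod_erase_update_left (x y : Fin n → Bool) (b : Bool) :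
    ∏ j ∈ univ.erase i, μ (update x i b j, y j) = ∏ j ∈ univ.erase i, μ (x j, y j) :=
  prod_congr rfl fun j hj => by rw [update_of_ne (ne_of_mem_erase hj)]

lemma prod_erase_update_right (x y : Fin n → Bool) (b : Bool) :
    ∏ j ∈ univ.erase i, μ (x j, update y i b j) = ∏ j ∈ univ.erase i, μ (x j, y j) :=
  prod_congr rfl fun j hj => by rw [update_of_ne (ne_of_mem_erase hj)]

lemma prod_update_left (x y : Fin n → Bool) (b : Bool) :
    ∏ j, μ (update x i b j, y j) = μ (b, y i) * ∏ j ∈ univ.erase i, μ (x j, y j) := by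
  rw [← mul_prod_erase univ _ (mem_univ i), update_self, prod_erase_update_left]

lemma corr_eq_sum_erase_div_four (hmargy : ∀ b, μ (true, b) + μ (false, b) = 1/2)
    {g : (Fin n → Bool) → ℝ} (hg : ∀ x b, g (update x i b) = g x) (h : (Fin n → Bool) → ℝ) :
    corr μ g h = (∑ x, g x * ∑ y, (∏ j ∈ univ.erase i, μ (x j, y j)) * h y) / 4 := by
  have hcorr : corr μ g h = ∑ x, g x * ∑ y, (∏ j, μ (x j, y j)) * h y := by
    simp only [corr, mul_sum]
    exact sum_congr rfl fun x _ => sum_congr rfl fun y _ => by ring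
  rw [hcorr, ← sum_mul_avgCoord_of_update i hg, sum_div]
  refine sum_congr rfl fun x _ => ?_
  rw [mul_div_assoc]
  congr 1
  simp only [avgCoord, prod_update_left, ← sum_add_distrib, sum_div]
  refine sum_congr rfl fun y _ => ?_
  linear_combination (∏ j ∈ univ.erase i, μ (x j, y j)) * h y / 2 * hmargy (y i)

lemma corr_avgCoord_right (hmargy : ∀ b, μ (true, b) + μ (false, b) = 1/2)
    {g : (Fin n → Bool) → ℝ} (hg : ∀ x b, g (update x i b) = g x) (h : (Fin n → Bool) → ℝ) :
    corr μ g (avgCoord i h) = corr μ g h := by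
  rw [corr_eq_sum_erase_div_four μ i hmargy hg, corr_eq_sum_erase_div_four μ i hmargy hg]
  congr 1
  exact sum_congr rfl fun x _ => by
    rw [sum_mul_avgCoord_of_update i (prod_erase_update_right μ i x)]

end

lemma abs_corr_sub_corr_avgCoord_le_of_influenceR_left (hnn : ∀ p, 0 ≤ μ p)
    (hmargx : ∀ b, μ (b, true) + μ (b, false) = 1/2)
    (hmargy : ∀ b, μ (true, b) + μ (false, b) = 1/2) {f g : (Fin n → Bool) → ℝ}
    (hg : ∀ y, g y ∈ Set.Icc (0 : ℝ) 1) (i : Fin n) {ε : ℝ} (hf : influenceR n f i ≤ ε) :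
    |corr μ f g - corr μ (avgCoord i f) (avgCoord i g)| ≤ √ε := by
  rw [corr_avgCoord_right μ i hmargy (avgCoord_update i f), corr_sub_left]
  have hcard : (Fintype.card (Fin n → Bool) : ℝ) = 2 ^ n := by simp
  calc _ ≤ (∑ x, |f x - avgCoord i f x|) / 2 ^ n := abs_corr_le μ hnn hmargx _ hg
    _ ≤ √((∑ x, (f x - avgCoord i f x) ^ 2) / 2 ^ n) := by
        simpa only [hcard] using sum_abs_div_card_le_sqrt fun x => f x - avgCoord i f x
    _ ≤ √ε := Real.sqrt_le_sqrt hf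

lemma abs_corr_sub_corr_avgCoord_le (hnn : ∀ p, 0 ≤ μ p)
    (hmargx : ∀ b, μ (b, true) + μ (b, false) = 1/2)
    (hmargy : ∀ b, μ (true, b) + μ (false, b) = 1/2) {f g : (Fin n → Bool) → ℝ}
    (hf : ∀ x, f x ∈ Set.Icc (0 : ℝ) 1) (hg : ∀ y, g y ∈ Set.Icc (0 : ℝ) 1) (i : Fin n) {ε : ℝ}
    (hi : influenceR n f i ≤ ε ∨ influenceR n g i ≤ ε) :
    |corr μ f g - corr μ (avgCoord i f) (avgCoord i g)| ≤ √ε := by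
  rcases hi with hfi | hgi
  · exact abs_corr_sub_corr_avgCoord_le_of_influenceR_left μ hnn hmargx hmargy hg i hfi
  · rw [← corr_swap μ f g, ← corr_swap μ]
    exact abs_corr_sub_corr_avgCoord_le_of_influenceR_left (fun p => μ p.swap) (fun p => hnn _)
      hmargy hmargx hf i hgi

lemma abs_corr_sub_corr_avgOut_le (hnn : ∀ p, 0 ≤ μ p)
    (hmargx : ∀ b, μ (b, true) + μ (b, false) = 1/2)
    (hmargy : ∀ b, μ (true, b) + μ (false, b) = 1/2) {f₁ f₂ : (Fin n → Bool) → ℝ}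
    (hf₁ : ∀ x, f₁ x ∈ Set.Icc (0 : ℝ) 1) (hf₂ : ∀ x, f₂ x ∈ Set.Icc (0 : ℝ) 1) {ε : ℝ}
    (S : Finset (Fin n)) (hS : ∀ i ∈ S, influenceR n f₁ i ≤ ε ∨ influenceR n f₂ i ≤ ε) :
    |corr μ f₁ f₂ - corr μ (avgOut n S f₁) (avgOut n S f₂)| ≤ S.card * √ε := by
  induction S using Finset.induction_on with
  | empty => simp [avgOut_empty]
  | insert i S hi ih =>
    have hstep := abs_corr_sub_corr_avgCoord_le μ hnn hmargx hmargy
      (avgOut_mem_Icc S hf₁) (avgOut_mem_Icc S hf₂) i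
      ((hS i (mem_insert_self i S)).imp (influenceR_avgOut_le S f₁ i).trans
        (influenceR_avgOut_le S f₂ i).trans)
    rw [avgOut_insert hi, avgOut_insert hi, card_insert_of_notMem hi, Nat.cast_succ, add_one_mul]
    exact (abs_sub_le _ _ _).trans
      (add_le_add (ih fun j hj => hS j (mem_insert_of_mem hj)) hstep)

end corr

/-- Averaging lemma: let `μ` be a distribution on `{-1,1}²` with uniform marginals and
let `(X_i, Y_i)` be i.i.d. from `μ`.  If for each `i ∈ S` at most one of
`f₁, f₂ : {-1,1}ⁿ → [0,1]` has `I_i > ε`, then the averaged functions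
`g_j = avgOut S f_j` do not depend on the coordinates in `S`, are `[0,1]`-valued, have
the same expectations as the `f_j`, and satisfy
`|E[f₁(X) f₂(Y)] - E[g₁(X) g₂(Y)]| ≤ |S| √ε`. -/
theorem stmt_18 (n : ℕ) (μ : Bool × Bool → ℝ)
    (hnn : ∀ p, 0 ≤ μ p)
    (hmargx : ∀ b, μ (b, true) + μ (b, false) = 1/2)
    (hmargy : ∀ b, μ (true, b) + μ (false, b) = 1/2)
    (f₁ f₂ : (Fin n → Bool) → ℝ)
    (hf₁ : ∀ x, f₁ x ∈ Set.Icc (0:ℝ) 1) (hf₂ : ∀ x, f₂ x ∈ Set.Icc (0:ℝ) 1)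
    (ε : ℝ) (S : Finset (Fin n))
    (hS : ∀ i ∈ S, influenceR n f₁ i ≤ ε ∨ influenceR n f₂ i ≤ ε) :
    (∀ (f : (Fin n → Bool) → ℝ) (x x' : Fin n → Bool), (∀ i ∉ S, x i = x' i) →
        avgOut n S f x = avgOut n S f x') ∧
    (∀ x, avgOut n S f₁ x ∈ Set.Icc (0:ℝ) 1 ∧ avgOut n S f₂ x ∈ Set.Icc (0:ℝ) 1) ∧
    ((∑ x : Fin n → Bool, avgOut n S f₁ x) / 2^n = (∑ x : Fin n → Bool, f₁ x) / 2^n) ∧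
    ((∑ x : Fin n → Bool, avgOut n S f₂ x) / 2^n = (∑ x : Fin n → Bool, f₂ x) / 2^n) ∧
    |(∑ x : Fin n → Bool, ∑ y : Fin n → Bool,
        (∏ i, μ (x i, y i)) * (f₁ x * f₂ y)) -
     (∑ x : Fin n → Bool, ∑ y : Fin n → Bool,
        (∏ i, μ (x i, y i)) * (avgOut n S f₁ x * avgOut n S f₂ y))|
      ≤ S.card * Real.sqrt ε :=
  ⟨fun f _ _ h => avgOut_congr S f h,
    fun x => ⟨avgOut_mem_Icc S hf₁ x, avgOut_mem_Icc S hf₂ x⟩,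
    by rw [sum_avgOut], by rw [sum_avgOut],
    abs_corr_sub_corr_avgOut_le μ hnn hmargx hmargy hf₁ hf₂ S hS⟩
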